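/- arXiv:2405.04162 — 3 statements merged into one kernel-verified Lean document; each statement's English description precedes it below -/
import Mathlib

section
/- Let π : Ŷ → Y be a finite covering map of topological spaces with p sheets, and let θ be a closed 1-form on Y (equivalently, a Čech 0-cocycle with values in continuous functions modulo locally constant functions, i.e. a collection (U_i, f_i) with f_i - f_j locally constant on overlaps). If the pullback π*θ is exact (i.e. π*θ = dF for a globally defined continuous function F on Ŷ), then θ is exact on Y. -/
open Set Metric

/-- A topologically closed 1-form (TC1-form): an open cover with continuous local
functions whose differences are locally constant on overlaps. -/
structure TC1Form (Y : Type*) [TopologicalSpace Y] : Type _ where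
  ι : Type
  U : ι → Set Y
  isOpen : ∀ i, IsOpen (U i)
  cover : ∀ y : Y, ∃ i, y ∈ U i
  f : ι → Y → ℝ
  cont : ∀ i, ContinuousOn (f i) (U i)
  locConst : ∀ i j, IsLocallyConstant (fun p : ↥(U i ∩ U j) => f i p - f j p)

/-- A TC1-form is exact if it is represented by a single global continuous function. -/
def TC1Form.IsExact {Y : Type*} [TopologicalSpace Y] (θ : TC1Form Y) : Prop :=
  ∃ F : Y → ℝ, Continuous F ∧ ∀ i, IsLocallyConstant (fun p : ↥(θ.U i) => F p - θ.f i p)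

/-- Pullback of a TC1-form along a continuous map. -/
def TC1Form.pullback {X Y : Type*} [TopologicalSpace X] [TopologicalSpace Y]
    (θ : TC1Form Y) (π : X → Y) (hπ : Continuous π) : TC1Form X where
  ι := θ.ι
  U i := π ⁻¹' θ.U i
  isOpen i := (θ.isOpen i).preimage hπ
  cover x := θ.cover (π x)
  f i := θ.f i ∘ π
  cont i := (θ.cont i).comp hπ.continuousOn (fun x hx => hx)
  locConst i j := by
    have hmap : Continuous (fun p : ↥((π ⁻¹' θ.U i) ∩ (π ⁻¹' θ.U j)) =>
        (⟨π p, p.2⟩ : ↥(θ.U i ∩ θ.U j))) :=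
      Continuous.subtype_mk (hπ.comp continuous_subtype_val) _
    exact (θ.locConst i j).comp_continuous hmap

/-- The exact TC1-form `dF` of a global continuous function `F`. -/
def TC1Form.ofFun {Y : Type*} [TopologicalSpace Y] (F : Y → ℝ) (hF : Continuous F) :
    TC1Form Y where
  ι := PUnit
  U _ := Set.univ
  isOpen _ := isOpen_univ
  cover _ := ⟨PUnit.unit, trivial⟩
  f _ := F
  cont _ := hF.continuousOn
  locConst _ _ := by
    have h : (fun p : ↥((Set.univ : Set Y) ∩ Set.univ) => F ↑p - F ↑p)
        = fun _ => (0 : ℝ) := by funext p; ring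
    rw [h]; exact IsLocallyConstant.const 0

/-- Two TC1-forms represent the same form if differences of their local
primitives are locally constant. -/
def TC1Form.Same {Y : Type*} [TopologicalSpace Y] (θ₁ θ₂ : TC1Form Y) : Prop :=
  ∀ i j, IsLocallyConstant (fun p : ↥(θ₁.U i ∩ θ₂.U j) => θ₁.f i p - θ₂.f j p)

/-- A closed curve, parametrized as a 1-periodic continuous map from `ℝ`. -/
def IsClosedCurve {Y : Type*} [TopologicalSpace Y] (γ : ℝ → Y) : Prop :=
  Continuous γ ∧ ∀ t : ℝ, γ (t + 1) = γ t

/-- `r` is the integral of the TC1-form `θ` along the curve `γ` (over `[0,1]`),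
computed by a subdivision subordinated to the cover of `θ`. -/
def TC1Form.IsIntegral {Y : Type*} [TopologicalSpace Y] (θ : TC1Form Y) (γ : ℝ → Y)
    (r : ℝ) : Prop :=
  ∃ (N : ℕ) (t : ℕ → ℝ) (idx : ℕ → θ.ι), 0 < N ∧ t 0 = 0 ∧ t N = 1 ∧
    (∀ k < N, t k < t (k + 1)) ∧
    (∀ k < N, γ '' Set.Icc (t k) (t (k + 1)) ⊆ θ.U (idx k)) ∧
    r = ∑ k ∈ Finset.range N, (θ.f (idx k) (γ (t (k + 1))) - θ.f (idx k) (γ (t k)))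

/-- A map has exactly `p` sheets if every fiber has exactly `p` points. -/
def HasSheets {E X : Type*} [TopologicalSpace E] [TopologicalSpace X] (π : E → X)
    (p : ℕ) : Prop :=
  ∀ x : X, (π ⁻¹' {x}).ncard = p

/-- Abstract structure of a (reduced) complex analytic space on a topological space:
the data of holomorphic functions on subsets, analytic subsets with their dimensions,
the regular locus, irreducible components and (local/global) irreducibility predicates. -/
structure ComplexSpaceData (X : Type*) [TopologicalSpace X] : Type _ where
  IsHolomorphicOn : (X → ℂ) → Set X → Prop
  holo_continuousOn : ∀ f s, IsHolomorphicOn f s → ContinuousOn f s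
  IsAnalyticSet : Set X → Prop
  dim : Set X → ℕ∞
  reg : Set X
  irreducibleComponents : Set (Set X)
  IsIrreducibleSet : Set X → Prop
  IsIrreducibleAt : X → Prop
  IsIrreducibleSpace : Prop
  IsNormalSpace : Prop

/-- A holomorphic disc in the complex space `X`: a map from the unit disc which is
continuous and pulls back holomorphic functions to holomorphic functions. -/
def ComplexSpaceData.HoloDisc {X : Type*} [TopologicalSpace X] (D : ComplexSpaceData X)
    (h : ℂ → X) : Prop :=
  ContinuousOn h (ball (0 : ℂ) 1) ∧
    ∀ g s, D.IsHolomorphicOn g s →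
      DifferentiableOn ℂ (g ∘ h) (ball (0 : ℂ) 1 ∩ h ⁻¹' s)

/-- Sub-mean-value property on a set for an `EReal`-valued function,
phrased via continuous majorants on circles. -/
def SubmeanOn (φ : ℂ → EReal) (s : Set ℂ) : Prop :=
  ∀ (c : ℂ) (r : ℝ), 0 < r → closedBall c r ⊆ s →
    ∀ g : ℝ → ℝ, Continuous g →
      (∀ t : ℝ, φ (c + (r : ℂ) * Complex.exp ((t : ℂ) * Complex.I)) ≤ (g t : EReal)) →
      φ c ≤ (((2 * Real.pi)⁻¹ * ∫ t in (0 : ℝ)..(2 * Real.pi), g t : ℝ) : EReal)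

/-- Plurisubharmonicity on a subset of a complex space, in the sense of
Fornaess–Narasimhan: upper semicontinuous, and subharmonic along every holomorphic disc. -/
def ComplexSpaceData.IsPshOn {X : Type*} [TopologicalSpace X] (D : ComplexSpaceData X)
    (φ : X → EReal) (s : Set X) : Prop :=
  UpperSemicontinuousOn φ s ∧
    ∀ h : ℂ → X, D.HoloDisc h → Set.MapsTo h (ball (0 : ℂ) 1) s →
      SubmeanOn (fun z => φ (h z)) (ball (0 : ℂ) 1)

/-- Smoothness of a real function on a complex space: locally a smooth function of
finitely many holomorphic functions (i.e. smooth in local embeddings). -/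
def ComplexSpaceData.IsSmoothOn {X : Type*} [TopologicalSpace X] (D : ComplexSpaceData X)
    (f : X → ℝ) (s : Set X) : Prop :=
  ∀ x ∈ s, ∃ U : Set X, IsOpen U ∧ x ∈ U ∧
    ∃ (m : ℕ) (g : Fin m → X → ℂ) (F : (Fin m → ℂ) → ℝ),
      (∀ i, D.IsHolomorphicOn (g i) U) ∧ ContDiff ℝ (⊤ : ℕ∞) F ∧
      ∀ y ∈ U ∩ s, f y = F fun i => g i y

/-- Strict plurisubharmonicity: psh, and locally remains psh after subtracting a small
positive multiple of a sum of squared moduli of holomorphic functions. -/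
def ComplexSpaceData.IsStrictlyPshOn {X : Type*} [TopologicalSpace X]
    (D : ComplexSpaceData X) (φ : X → EReal) (s : Set X) : Prop :=
  D.IsPshOn φ s ∧ ∀ x ∈ s, ∃ U : Set X, IsOpen U ∧ x ∈ U ∧ ∃ ε : ℝ, 0 < ε ∧
    ∃ (m : ℕ) (g : Fin m → X → ℂ), (∀ i, D.IsHolomorphicOn (g i) U) ∧
      D.IsPshOn (fun y => φ y - ((ε * ∑ i, Complex.normSq (g i y) : ℝ) : EReal)) (U ∩ s)

/-- The Laplacian of a real function on `ℂ` (sum of the second derivatives in the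
directions `1` and `i`). -/
noncomputable def lap (u : ℂ → ℝ) (z : ℂ) : ℝ :=
  iteratedFDeriv ℝ 2 u z ![1, 1] + iteratedFDeriv ℝ 2 u z ![Complex.I, Complex.I]

/-- A holomorphic map between complex spaces. -/
def IsHolomorphicMap {X Y : Type*} [TopologicalSpace X] [TopologicalSpace Y]
    (DX : ComplexSpaceData X) (DY : ComplexSpaceData Y) (f : X → Y) : Prop :=
  Continuous f ∧ ∀ g s, DY.IsHolomorphicOn g s → DX.IsHolomorphicOn (g ∘ f) (f ⁻¹' s)

/-- A holomorphic map on a subset of a complex space. -/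
def IsHolomorphicMapOn {X Y : Type*} [TopologicalSpace X] [TopologicalSpace Y]
    (DX : ComplexSpaceData X) (DY : ComplexSpaceData Y) (f : X → Y) (s : Set X) : Prop :=
  ContinuousOn f s ∧ ∀ g t, DY.IsHolomorphicOn g t → DX.IsHolomorphicOn (g ∘ f) (s ∩ f ⁻¹' t)

/-- A Kähler metric on a complex space, in Grauert's sense: local smooth strictly psh
potentials whose `i∂∂̄` agree on overlaps intersected with the regular part (tested
along holomorphic discs via the Laplacian). -/
structure KahlerMetric (X : Type*) [TopologicalSpace X] (D : ComplexSpaceData X) :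
    Type _ where
  ι : Type
  U : ι → Set X
  isOpen : ∀ i, IsOpen (U i)
  cover : ∀ x : X, ∃ i, x ∈ U i
  φ : ι → X → ℝ
  smooth : ∀ i, D.IsSmoothOn (φ i) (U i)
  spsh : ∀ i, D.IsStrictlyPshOn (fun x => ((φ i x : ℝ) : EReal)) (U i)
  compat : ∀ i j, ∀ h : ℂ → X, D.HoloDisc h →
    Set.MapsTo h (ball (0 : ℂ) 1) (U i ∩ U j ∩ D.reg) →
    ∀ z ∈ ball (0 : ℂ) 1, lap (φ i ∘ h) z = lap (φ j ∘ h) z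

/-- An lcK metric on a complex space (Preda–Stanciu): local smooth strictly psh
potentials `φ_i` and smooth `f_i` with `i e^{f_i}∂∂̄φ_i = i e^{f_j}∂∂̄φ_j` on overlaps
intersected with the regular part, `f_i - f_j` locally constant (so that the Lee form
is a TC1-form). -/
structure LcKMetric (X : Type*) [TopologicalSpace X] (D : ComplexSpaceData X) :
    Type _ where
  ι : Type
  U : ι → Set X
  isOpen : ∀ i, IsOpen (U i)
  cover : ∀ x : X, ∃ i, x ∈ U i
  φ : ι → X → ℝ
  f : ι → X → ℝ
  smoothφ : ∀ i, D.IsSmoothOn (φ i) (U i)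
  spsh : ∀ i, D.IsStrictlyPshOn (fun x => ((φ i x : ℝ) : EReal)) (U i)
  smoothf : ∀ i, D.IsSmoothOn (f i) (U i)
  contf : ∀ i, ContinuousOn (f i) (U i)
  leeLocConst : ∀ i j, IsLocallyConstant (fun p : ↥(U i ∩ U j) => f i p - f j p)
  compat : ∀ i j, ∀ h : ℂ → X, D.HoloDisc h →
    Set.MapsTo h (ball (0 : ℂ) 1) (U i ∩ U j ∩ D.reg) →
    ∀ z ∈ ball (0 : ℂ) 1,
      Real.exp (f i (h z)) * lap (φ i ∘ h) z = Real.exp (f j (h z)) * lap (φ j ∘ h) z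

/-- The Lee form of an lcK metric, as a TC1-form. -/
def LcKMetric.leeForm {X : Type*} [TopologicalSpace X] {D : ComplexSpaceData X}
    (ω : LcKMetric X D) : TC1Form X where
  ι := ω.ι
  U := ω.U
  isOpen := ω.isOpen
  cover := ω.cover
  f := ω.f
  cont := ω.contf
  locConst := ω.leeLocConst

/-- An lcK metric is globally conformally Kähler if its Lee form is exact. -/
def LcKMetric.IsGcK {X : Type*} [TopologicalSpace X] {D : ComplexSpaceData X}
    (ω : LcKMetric X D) : Prop :=
  ω.leeForm.IsExact

/-- `π : X̂ → X` is the normalization of `X`: a finite surjective holomorphic map from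
a normal complex space, biholomorphic over the complement of a nowhere dense analytic
subset. -/
def IsNormalization {Xh X : Type*} [TopologicalSpace Xh] [TopologicalSpace X]
    (Dh : ComplexSpaceData Xh) (D : ComplexSpaceData X) (π : Xh → X) : Prop :=
  IsHolomorphicMap Dh D π ∧ IsProperMap π ∧ (∀ x, (π ⁻¹' {x}).Finite) ∧
    Function.Surjective π ∧ Dh.IsNormalSpace ∧
    ∃ A : Set X, D.IsAnalyticSet A ∧ interior A = ∅ ∧ Set.BijOn π (π ⁻¹' Aᶜ) Aᶜ

private lemma lc_finsum {X ι : Type*} [TopologicalSpace X] [Fintype ι] {f : ι → X → ℝ}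
    (h : ∀ i, IsLocallyConstant (f i)) : IsLocallyConstant fun x => ∑ i, f i x := by
  rw [IsLocallyConstant.iff_eventually_eq]
  intro x
  have : ∀ᶠ y in nhds x, ∀ i, f i y = f i x :=
    Filter.eventually_all.mpr fun i => (h i).eventually_eq x
  exact this.mono fun y hy => Finset.sum_congr rfl fun i _ => hy i

/-- If the pullback of a TC1-form under a finite covering map with `p`
sheets is exact, then the form is exact. -/
theorem vaisman_stmt0 {Yh Y : Type*} [TopologicalSpace Yh] [TopologicalSpace Y]
    (π : Yh → Y) (hcov : IsCoveringMap π) (p : ℕ) (hp : 0 < p)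
    (hsheets : HasSheets π p) (θ : TC1Form Y)
    (hexact : (θ.pullback π hcov.continuous).IsExact) : θ.IsExact := by
  classical
  obtain ⟨F, hFc, hFlc⟩ := hexact
  have hfin : ∀ y, (π ⁻¹' {y}).Finite := by
    intro y
    by_contra h
    have h2 : (π ⁻¹' {y}).ncard = 0 := Set.Infinite.ncard h
    rw [hsheets y] at h2; omega
  have hp0 : (p : ℝ) ≠ 0 := Nat.cast_ne_zero.mpr hp.ne'
  set G : Y → ℝ := fun y => (∑ᶠ x ∈ π ⁻¹' {y}, F x) / p with hG
  have key : ∀ y₀ : Y,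
      ∃ V : Set Y, IsOpen V ∧ y₀ ∈ V ∧
        ∃ g : Y → ↥(π ⁻¹' {y₀}) → Yh,
          (∀ s, ContinuousOn (fun y => g y s) V) ∧
          (∀ y ∈ V, ∀ s, π (g y s) = y) ∧
          (∀ y ∈ V, letI := (hfin y₀).fintype; G y = (∑ s, F (g y s)) / p) := by
    intro y₀
    letI := (hfin y₀).fintype
    have hec := hcov y₀
    haveI : Nonempty ↥(π ⁻¹' {y₀}) :=
      (Set.nonempty_of_ncard_ne_zero (by rw [hsheets y₀]; omega)).to_subtype
    set e := hec.toTrivialization with he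
    refine ⟨e.baseSet, e.open_baseSet, hec.mem_toTrivialization_baseSet,
      fun y s => e.toOpenPartialHomeomorph.symm (y, s), ?_, ?_, ?_⟩
    · intro s
      exact e.toOpenPartialHomeomorph.continuousOn_symm.comp
        (Continuous.prodMk_left s).continuousOn
        (fun y hy => e.mem_target.mpr hy)
    · intro y hy s
      exact e.proj_symm_apply' hy
    · intro y hy
      have hinj : Function.Injective fun s : ↥(π ⁻¹' {y₀}) =>
          e.toOpenPartialHomeomorph.symm (y, s) := by
        intro s₁ s₂ hs
        have hs' : e.toOpenPartialHomeomorph.symm (y, s₁) = e.toOpenPartialHomeomorph.symm (y, s₂) := hs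
        have h1 := e.apply_symm_apply' (x := s₁) hy
        have h2 := e.apply_symm_apply' (x := s₂) hy
        rw [hs'] at h1
        rw [h1] at h2
        exact (Prod.mk.injEq _ _ _ _).mp h2 |>.2
      have hrange : Set.range (fun s : ↥(π ⁻¹' {y₀}) =>
          e.toOpenPartialHomeomorph.symm (y, s)) = π ⁻¹' {y} := by
        ext x
        constructor
        · rintro ⟨s, rfl⟩
          exact e.proj_symm_apply' hy
        · intro hx
          have hxs : x ∈ e.source := e.mem_source.mpr (by rwa [hx])
          refine ⟨(e x).2, ?_⟩
          have hmk := e.mk_proj_snd hxs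
          have hxy : π x = y := hx
          show e.toOpenPartialHomeomorph.symm (y, (e x).2) = x
          rw [← hxy, hmk]
          exact e.toOpenPartialHomeomorph.left_inv hxs
      have hsum : ∑ᶠ x ∈ π ⁻¹' {y}, F x
          = ∑ s : ↥(π ⁻¹' {y₀}), F (e.toOpenPartialHomeomorph.symm (y, s)) := by
        rw [← hrange, finsum_mem_range hinj, finsum_eq_sum_of_fintype]
      show (∑ᶠ x ∈ π ⁻¹' {y}, F x) / p = _
      rw [hsum]
  have hcard : ∀ y₀ : Y, letI := (hfin y₀).fintype; Fintype.card ↥(π ⁻¹' {y₀}) = p := by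
    intro y₀
    letI := (hfin y₀).fintype
    rw [← Nat.card_eq_fintype_card, Nat.card_coe_set_eq, hsheets y₀]
  have hGc : Continuous G := by
    rw [continuous_iff_continuousAt]
    intro y₀
    obtain ⟨V, hVo, hy₀, g, hgc, hgπ, hGeq⟩ := key y₀
    letI := (hfin y₀).fintype
    have hc : ContinuousOn (fun y => (∑ s : ↥(π ⁻¹' {y₀}), F (g y s)) / p) V := by
      apply ContinuousOn.div_const
      exact continuousOn_finset_sum _ fun s _ => hFc.comp_continuousOn (hgc s)
    exact (hc.congr hGeq).continuousAt (hVo.mem_nhds hy₀)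
  refine ⟨G, hGc, ?_⟩
  intro i
  rw [IsLocallyConstant.iff_eventually_eq]
  intro x₀
  obtain ⟨V, hVo, hy₀, g, hgc, hgπ, hGeq⟩ := key (x₀ : Y)
  letI := (hfin (x₀ : Y)).fintype
  set W : Set Y := V ∩ θ.U i with hW
  have hWo : IsOpen W := hVo.inter (θ.isOpen i)
  have hy₀W : (x₀ : Y) ∈ W := ⟨hy₀, x₀.2⟩
  -- the locally constant sum on W
  have hglc : ∀ s : ↥(π ⁻¹' {(x₀ : Y)}),
      IsLocallyConstant (fun q : ↥W => F (g (↑q) s) - θ.f i (π (g (↑q) s))) := by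
    intro s
    have hcont : Continuous (fun q : ↥W => (⟨g (↑q) s, by
        have := hgπ (↑q) q.2.1 s
        simp only [Set.mem_preimage, this]
        exact q.2.2⟩ : ↥(π ⁻¹' θ.U i))) := by
      apply Continuous.subtype_mk
      exact (hgc s).comp_continuous continuous_subtype_val (fun q => q.2.1)
    exact (hFlc i).comp_continuous hcont
  have hklc : IsLocallyConstant (fun q : ↥W =>
      ∑ s : ↥(π ⁻¹' {(x₀ : Y)}), (F (g (↑q) s) - θ.f i (π (g (↑q) s)))) :=
    lc_finsum hglc
  -- value identity on W
  have hval : ∀ q : ↥W, G (↑q) - θ.f i (↑q)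
      = (∑ s : ↥(π ⁻¹' {(x₀ : Y)}), (F (g (↑q) s) - θ.f i (π (g (↑q) s)))) / p := by
    intro q
    have h1 : ∀ s : ↥(π ⁻¹' {(x₀ : Y)}), π (g (↑q) s) = (↑q : Y) := fun s => hgπ _ q.2.1 s
    have h2 : (∑ s : ↥(π ⁻¹' {(x₀ : Y)}), (F (g (↑q) s) - θ.f i (π (g (↑q) s))))
        = (∑ s : ↥(π ⁻¹' {(x₀ : Y)}), F (g (↑q) s)) - p * θ.f i (↑q) := by
      rw [Finset.sum_sub_distrib]
      congr 1
      rw [Finset.sum_congr rfl (fun s _ => by rw [h1 s]), Finset.sum_const,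
        Finset.card_univ, hcard (x₀ : Y)]
      simp [nsmul_eq_mul]
    rw [h2, hGeq (↑q) q.2.1]
    field_simp
  -- locally constant: find open set where the sum is constant
  obtain ⟨O, hOopen, hOmem, hOconst⟩ := hklc.exists_open ⟨(x₀ : Y), hy₀W⟩
  obtain ⟨O', hO'o, hO'eq⟩ := isOpen_induced_iff.mp hOopen
  have hx₀O' : (x₀ : Y) ∈ O' := by
    have h : (⟨(x₀ : Y), hy₀W⟩ : ↥W) ∈ Subtype.val ⁻¹' O' := by rw [hO'eq]; exact hOmem
    exact h
  have hmem : ∀ᶠ q : ↥(θ.U i) in nhds x₀, (q : Y) ∈ O' ∩ V := by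
    have hopen : IsOpen {q : ↥(θ.U i) | (q : Y) ∈ O' ∩ V} :=
      (hO'o.inter hVo).preimage continuous_subtype_val
    exact hopen.mem_nhds ⟨hx₀O', hy₀⟩
  refine hmem.mono ?_
  rintro q ⟨hqO', hqV⟩
  have hqW : (q : Y) ∈ W := ⟨hqV, q.2⟩
  have hqO : (⟨(q : Y), hqW⟩ : ↥W) ∈ O := by
    have h : (⟨(q : Y), hqW⟩ : ↥W) ∈ Subtype.val ⁻¹' O' := hqO'
    rw [hO'eq] at h; exact h
  have e1 : G (q : Y) - θ.f i (q : Y)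
      = (∑ s : ↥(π ⁻¹' {(x₀ : Y)}), (F (g (q : Y) s) - θ.f i (π (g (q : Y) s)))) / p :=
    hval ⟨(q : Y), hqW⟩
  have e2 : G (x₀ : Y) - θ.f i (x₀ : Y)
      = (∑ s : ↥(π ⁻¹' {(x₀ : Y)}), (F (g (x₀ : Y) s) - θ.f i (π (g (x₀ : Y) s)))) / p :=
    hval ⟨(x₀ : Y), hy₀W⟩
  have e3 : (∑ s : ↥(π ⁻¹' {(x₀ : Y)}), (F (g (q : Y) s) - θ.f i (π (g (q : Y) s))))
      = ∑ s : ↥(π ⁻¹' {(x₀ : Y)}), (F (g (x₀ : Y) s) - θ.f i (π (g (x₀ : Y) s))) :=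
    hOconst _ hqO
  rw [e1, e3, ← e2]
end

section
/- Let Y be a connected complex manifold (or, more generally, a connected manifold) and S ⊂ Y a closed subset which is locally contained in an analytic subset of positive codimension, so that Y ∖ S is locally connected around points of S and the inclusion Y ∖ S ↪ Y is surjective on fundamental groups. If θ is a TC1-form on Y whose restriction to Y ∖ S is exact, then θ is exact on Y. -/
open Set Metric

/-- if `S ⊂ Y` is a closed subset such that `Y ∖ S` is dense, `Y ∖ S` is
locally connected around points of `S`, and every closed curve of `Y` can be homotoped
into `Y ∖ S`, then a TC1-form whose restriction to `Y ∖ S` is exact is exact on `Y`. -/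
theorem vaisman_stmt4 {Y : Type*} [TopologicalSpace Y] [ConnectedSpace Y]
    (S : Set Y) (hSclosed : IsClosed S) (hdense : Dense Sᶜ)
    (hlocconn : ∀ x ∈ S, ∀ U ∈ nhds x, ∃ V ∈ nhds x, V ⊆ U ∧ IsConnected (V \ S))
    (hhomotop : ∀ γ : ℝ → Y, IsClosedCurve γ →
      ∃ H : ℝ → ℝ → Y, Continuous (fun st : ℝ × ℝ => H st.1 st.2) ∧
        (∀ s t : ℝ, H s (t + 1) = H s t) ∧ H 0 = γ ∧ ∀ t : ℝ, H 1 t ∉ S)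
    (θ : TC1Form Y)
    (hres : (θ.pullback (Subtype.val : ↥(Sᶜ) → Y) continuous_subtype_val).IsExact) :
    θ.IsExact := by
  classical
  obtain ⟨F, hFc, hFlc⟩ := hres
  -- near any point of `S` inside a chart, `F - θ.f i` is constant close by
  have hconst : ∀ (i : θ.ι) (x : Y), x ∈ S → x ∈ θ.U i →
      ∃ V ∈ nhds x, V ⊆ θ.U i ∧ ∃ c : ℝ,
        ∀ z ∈ V, ∀ hz : z ∈ Sᶜ, F ⟨z, hz⟩ = θ.f i z + c := by
    intro i x hx hxi
    obtain ⟨V, hV, hVU, hVconn⟩ := hlocconn x hx (θ.U i) ((θ.isOpen i).mem_nhds hxi)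
    refine ⟨V, hV, hVU, ?_⟩
    obtain ⟨z₀, hz₀⟩ := hVconn.nonempty
    refine ⟨F ⟨z₀, hz₀.2⟩ - θ.f i z₀, fun z hz hz' => ?_⟩
    set e : ↥(V \ S) → ↥(Subtype.val ⁻¹' θ.U i : Set ↥(Sᶜ : Set Y)) :=
      fun w => ⟨⟨w.1, w.2.2⟩, hVU w.2.1⟩ with he
    have hecont : Continuous e :=
      Continuous.subtype_mk (Continuous.subtype_mk continuous_subtype_val _) _
    have hlc : IsLocallyConstant
        (fun w : ↥(V \ S) => F (e w).1 - θ.f i ((e w).1 : Y)) :=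
      (hFlc i).comp_continuous hecont
    haveI : PreconnectedSpace ↥(V \ S) := Subtype.preconnectedSpace hVconn.isPreconnected
    have := hlc.apply_eq_of_preconnectedSpace ⟨z, hz, hz'⟩ ⟨z₀, hz₀⟩
    simp only [he] at this
    have hz2 : F ⟨z, hz'⟩ - θ.f i z = F ⟨z₀, hz₀.2⟩ - θ.f i z₀ := this
    linarith
  -- define the global primitive `G`
  have hval : ∀ x : Y, ∃ r : ℝ, (∀ hx : x ∈ Sᶜ, r = F ⟨x, hx⟩) ∧
      (x ∈ S → ∃ (i : θ.ι) (V : Set Y) (c : ℝ), V ∈ nhds x ∧ V ⊆ θ.U i ∧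
        (∀ z ∈ V, ∀ hz : z ∈ Sᶜ, F ⟨z, hz⟩ = θ.f i z + c) ∧ r = θ.f i x + c) := by
    intro x
    by_cases hx : x ∈ S
    · obtain ⟨i, hxi⟩ := θ.cover x
      obtain ⟨V, hV, hVU, c, hprop⟩ := hconst i x hx hxi
      exact ⟨θ.f i x + c, fun hx' => absurd hx hx', fun _ =>
        ⟨i, V, c, hV, hVU, hprop, rfl⟩⟩
    · exact ⟨F ⟨x, hx⟩, fun _ => rfl, fun hx' => absurd hx' hx⟩
  choose G hG1 hG2 using hval
  -- well-definedness lemma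
  have L : ∀ x ∈ S, ∀ (i : θ.ι) (V : Set Y) (c : ℝ), V ∈ nhds x → V ⊆ θ.U i →
      (∀ z ∈ V, ∀ hz : z ∈ Sᶜ, F ⟨z, hz⟩ = θ.f i z + c) → G x = θ.f i x + c := by
    intro x hx i V c hV hVU hprop
    obtain ⟨i₀, V₀, c₀, hV₀, hV₀U, hprop₀, hGx⟩ := hG2 x hx
    have hxi : x ∈ θ.U i := hVU (mem_of_mem_nhds hV)
    have hxi₀ : x ∈ θ.U i₀ := hV₀U (mem_of_mem_nhds hV₀)
    have hs : IsOpen (θ.U i ∩ θ.U i₀) := (θ.isOpen i).inter (θ.isOpen i₀)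
    set g : ↥(θ.U i ∩ θ.U i₀) → ℝ := fun p => θ.f i p - θ.f i₀ p with hg
    have hA : IsOpen (g ⁻¹' {g ⟨x, hxi, hxi₀⟩}) := θ.locConst i i₀ _
    set T : Set Y := Subtype.val '' (g ⁻¹' {g ⟨x, hxi, hxi₀⟩}) with hT
    have hTopen : IsOpen T := hs.isOpenMap_subtype_val _ hA
    have hxT : x ∈ T := ⟨⟨x, hxi, hxi₀⟩, rfl, rfl⟩
    set W : Set Y := T ∩ (interior V ∩ interior V₀) with hW
    have hWopen : IsOpen W := hTopen.inter (isOpen_interior.inter isOpen_interior)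
    have hxW : x ∈ W := ⟨hxT, mem_interior_iff_mem_nhds.2 hV, mem_interior_iff_mem_nhds.2 hV₀⟩
    obtain ⟨y, ⟨⟨hyT, hyV, hyV₀⟩, hy⟩⟩ := hdense.inter_open_nonempty W hWopen ⟨x, hxW⟩
    obtain ⟨q, hq, hqy⟩ := hyT
    have h1 : F ⟨y, hy⟩ = θ.f i y + c := hprop y (interior_subset hyV) hy
    have h2 : F ⟨y, hy⟩ = θ.f i₀ y + c₀ := hprop₀ y (interior_subset hyV₀) hy
    have h3 : θ.f i y - θ.f i₀ y = θ.f i x - θ.f i₀ x := by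
      have hq' : g q = g ⟨x, hxi, hxi₀⟩ := hq
      simp only [hg] at hq'
      rw [hqy] at hq'
      exact hq'
    rw [hGx]; linarith
  -- extension of the local identity to interior points
  have hext : ∀ (i : θ.ι) (V : Set Y) (c : ℝ), V ⊆ θ.U i →
      (∀ z ∈ V, ∀ hz : z ∈ Sᶜ, F ⟨z, hz⟩ = θ.f i z + c) →
      ∀ y ∈ interior V, G y = θ.f i y + c := by
    intro i V c hVU hprop y hy
    by_cases hyS : y ∈ S
    · exact L y hyS i (interior V) c (isOpen_interior.mem_nhds hy)
        (interior_subset.trans hVU) (fun z hz hz' => hprop z (interior_subset hz) hz')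
    · rw [hG1 y hyS]; exact hprop y (interior_subset hy) hyS
  -- continuity of G
  have hGcont : Continuous G := by
    rw [continuous_iff_continuousAt]
    intro x
    by_cases hx : x ∈ S
    · obtain ⟨i, V, c, hV, hVU, hprop, hGx⟩ := hG2 x hx
      have heq : ∀ y ∈ interior V, G y = θ.f i y + c := hext i V c hVU hprop
      have hx' : x ∈ interior V := mem_interior_iff_mem_nhds.2 hV
      have hcont : ContinuousAt (fun y => θ.f i y + c) x :=
        (((θ.cont i).continuousAt ((θ.isOpen i).mem_nhds
          (hVU (interior_subset hx')))).add continuousAt_const)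
      refine hcont.congr ?_
      filter_upwards [isOpen_interior.mem_nhds hx'] with y hy
      exact (heq y hy).symm
    · have hGS : ContinuousOn G Sᶜ := by
        rw [continuousOn_iff_continuous_restrict]
        have : (Sᶜ : Set Y).domRestrict G = F := funext fun p => hG1 p p.2
        rw [this]; exact hFc
      exact hGS.continuousAt (hSclosed.isOpen_compl.mem_nhds hx)
  refine ⟨G, hGcont, fun i => ?_⟩
  rw [IsLocallyConstant.iff_exists_open]
  rintro ⟨x, hxi⟩
  by_cases hx : x ∈ S
  · obtain ⟨V, hV, hVU, c, hprop⟩ := hconst i x hx hxi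
    have heq : ∀ y ∈ interior V, G y = θ.f i y + c := hext i V c hVU hprop
    have hx' : x ∈ interior V := mem_interior_iff_mem_nhds.2 hV
    refine ⟨Subtype.val ⁻¹' interior V,
      isOpen_interior.preimage continuous_subtype_val, hx', ?_⟩
    rintro ⟨y, hyi⟩ hy
    show G y - θ.f i y = G x - θ.f i x
    rw [heq y hy, heq x hx']; ring
  · -- use local constancy of F - f i on Sᶜ
    have hlc := hFlc i
    set p₀ : ↥(Subtype.val ⁻¹' θ.U i : Set ↥(Sᶜ : Set Y)) := ⟨⟨x, hx⟩, hxi⟩ with hp₀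
    have hA : IsOpen ((fun p : ↥(Subtype.val ⁻¹' θ.U i : Set ↥(Sᶜ : Set Y)) =>
        F p.1 - θ.f i (p.1 : Y)) ⁻¹' {F ⟨x, hx⟩ - θ.f i x}) := hlc _
    have hopen1 : IsOpen (Subtype.val ⁻¹' θ.U i : Set ↥(Sᶜ : Set Y)) :=
      (θ.isOpen i).preimage continuous_subtype_val
    set T : Set Y := Subtype.val '' (Subtype.val '' ((fun p :
        ↥(Subtype.val ⁻¹' θ.U i : Set ↥(Sᶜ : Set Y)) =>
        F p.1 - θ.f i (p.1 : Y)) ⁻¹' {F ⟨x, hx⟩ - θ.f i x})) with hT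
    have hTopen : IsOpen T :=
      hSclosed.isOpen_compl.isOpenMap_subtype_val _ (hopen1.isOpenMap_subtype_val _ hA)
    have hxT : x ∈ T := ⟨⟨x, hx⟩, ⟨p₀, rfl, rfl⟩, rfl⟩
    refine ⟨Subtype.val ⁻¹' T, hTopen.preimage continuous_subtype_val, hxT, ?_⟩
    rintro ⟨y, hyi⟩ hy
    obtain ⟨q, ⟨p, hp, hpq⟩, hqy⟩ := hy
    have hyS : y ∉ S := by have h := q.2; rw [hqy] at h; exact h
    have hpy : ((p : ↥(Sᶜ : Set Y)) : Y) = y := by rw [hpq]; exact hqy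
    have hFy : F ⟨y, hyS⟩ - θ.f i y = F ⟨x, hx⟩ - θ.f i x := by
      have h : F (p : ↥(Sᶜ : Set Y)) - θ.f i ((p : ↥(Sᶜ : Set Y)) : Y)
          = F ⟨x, hx⟩ - θ.f i x := hp
      have hps : ((p : ↥(Sᶜ : Set Y))) = ⟨y, hyS⟩ := Subtype.ext hpy
      rw [hps] at h
      exact h
    show G y - θ.f i y = G x - θ.f i x
    rw [hG1 y hyS, hG1 x hx]
    exact hFy
end

section
/- Let P ⊂ ℂ² be the unit polydisc and ∼ the equivalence relation identifying (v, 0) with (0, v) for all |v| < 1 (and trivial elsewhere). Then the invariant holomorphic functions separate the non-trivial classes: for any two points (v₁, v₂), (w₁, w₂) ∈ P lying in distinct ∼-classes, there exists a holomorphic function g on P with g ∘ σ = g for the identification σ (e.g. g(v₁,v₂) = v₁ + v₂ or g(v₁,v₂) = v₁ v₂ h(v₁,v₂) for suitable holomorphic h) such that g takes distinct values at the two points. -/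
open Set Metric

/-- on the unit polydisc `P ⊂ ℂ²` with the identification
`(v,0) ∼ (0,v)`, invariant holomorphic functions separate distinct classes. -/
theorem vaisman_stmt15
    (P : Set (ℂ × ℂ))
    (hP : P = {v : ℂ × ℂ | ‖v.1‖ < 1 ∧ ‖v.2‖ < 1})
    (sim : ℂ × ℂ → ℂ × ℂ → Prop)
    (hsim : ∀ a b : ℂ × ℂ, sim a b ↔ a = b ∨
      (a.2 = 0 ∧ b.1 = 0 ∧ b.2 = a.1) ∨ (a.1 = 0 ∧ b.2 = 0 ∧ b.1 = a.2)) :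
    ∀ a ∈ P, ∀ b ∈ P, ¬ sim a b →
      ∃ g : ℂ × ℂ → ℂ, DifferentiableOn ℂ g P ∧
        (∀ v : ℂ, ‖v‖ < 1 → g (v, 0) = g (0, v)) ∧ g a ≠ g b := by

  intro a ha b hb hab
  rw [hsim] at hab
  push_neg at hab
  obtain ⟨hne, h1, h2⟩ := hab
  by_cases hs : a.1 + a.2 = b.1 + b.2
  · by_cases hp : a.1 * a.2 = b.1 * b.2
    · -- same sum and product: a = b or a = swap b
      have hroot : (b.1 - a.1) * (b.1 - a.2) = 0 := by
        linear_combination -b.1 * hs + hp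
      have hcases : b.1 = a.1 ∨ b.1 = a.2 := by
        rcases mul_eq_zero.mp hroot with h | h
        · exact Or.inl (sub_eq_zero.mp h)
        · exact Or.inr (sub_eq_zero.mp h)
      rcases hcases with h | h
      · have h2' : b.2 = a.2 := by linear_combination -hs - h
        exact absurd (Prod.ext h.symm h2'.symm) hne
      · have h2' : b.2 = a.1 := by linear_combination -hs - h
        have ha2 : a.2 ≠ 0 := fun hz => h1 hz (h.trans hz) h2'
        have ha1 : a.1 ≠ 0 := fun hz => h2 hz (h2'.trans hz) h
        have hd : a.1 ≠ a.2 := by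
          intro he
          exact hne (Prod.ext (h.trans he.symm).symm (h2'.trans he).symm)
        refine ⟨fun v => v.1 ^ 2 * v.2,
          ((differentiable_fst.pow 2).mul differentiable_snd).differentiableOn,
          fun v _ => by simp, ?_⟩
        simp only [h, h2']
        intro hc
        have : a.1 * a.2 * (a.1 - a.2) = 0 := by linear_combination hc
        rcases mul_eq_zero.mp this with h' | h'
        · rcases mul_eq_zero.mp h' with h'' | h''
          · exact ha1 h''
          · exact ha2 h''
        · exact hd (sub_eq_zero.mp h')
    · exact ⟨fun v => v.1 * v.2, (differentiable_fst.mul differentiable_snd).differentiableOn,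
        fun v _ => by simp, hp⟩
  · exact ⟨fun v => v.1 + v.2, (differentiable_fst.add differentiable_snd).differentiableOn,
      fun v _ => by simp, hs⟩
end
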